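/- Fix λ ∈ ℝ and let V = { (x₁,x₂,x₃,x₄,x₅,x,y) ∈ ℝ⁷ : x₄ ≠ 0 and x₅ ≠ 0 }. The map h₃(x₁,x₂,x₃,x₄,x₅,x,y) = (x₁, x₂ + λx₄·ln|x₄|, x₃ + x₅·ln|x₅|, x₄, x₅, x, y) restricts to a homeomorphism of V onto itself, and for every c ∈ ℝ and every pair of signs ε, δ ∈ {+1,−1}, h₃ maps the set { v ∈ V : x₂/x₄ − x₃/x₅ = c, εx₄ > 0, δx₅ > 0 } bijectively onto the set { v ∈ V : x₂/x₄ − x₃/x₅ + ln(|x₅|/|x₄|^λ) = c, εx₄ > 0, δx₅ > 0 }. (Hence h₃ is a topological equivalence between the foliation of V by the leaves of the first family and the foliation of V by the leaves of the second family.) -/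
import Mathlib


noncomputable section

/-- The foliated manifold `V = {x₄ ≠ 0, x₅ ≠ 0} ⊆ ℝ⁷` (coordinates
`(x₁,…,x₅,x,y)` indexed by `0,…,6`). -/
def V : Set (Fin 7 → ℝ) := {v | v 3 ≠ 0 ∧ v 4 ≠ 0}

/-- The map `h₃(x₁,x₂,x₃,x₄,x₅,x,y)
= (x₁, x₂ + λx₄·ln|x₄|, x₃ + x₅·ln|x₅|, x₄, x₅, x, y)`. -/
def h3 (l : ℝ) (v : Fin 7 → ℝ) : Fin 7 → ℝ :=
  ![v 0, v 1 + l * v 3 * Real.log |v 3|, v 2 + v 4 * Real.log |v 4|,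
    v 3, v 4, v 5, v 6]

/-- Inverse of `h3`. -/
def g3 (l : ℝ) (v : Fin 7 → ℝ) : Fin 7 → ℝ :=
  ![v 0, v 1 - l * v 3 * Real.log |v 3|, v 2 - v 4 * Real.log |v 4|,
    v 3, v 4, v 5, v 6]

lemma g3_h3 (l : ℝ) (v : Fin 7 → ℝ) : g3 l (h3 l v) = v := by
  funext i; fin_cases i <;> simp [h3, g3] <;> rfl

lemma h3_g3 (l : ℝ) (v : Fin 7 → ℝ) : h3 l (g3 l v) = v := by
  funext i; fin_cases i <;> simp [h3, g3] <;> rfl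

lemma contOn_h3 (l : ℝ) : ContinuousOn (h3 l) V := by
  have hlog3 : ContinuousOn (fun v : Fin 7 → ℝ => Real.log |v 3|) V := by
    apply ContinuousOn.log ((continuous_apply 3).abs.continuousOn)
    intro v hv; simpa using hv.1
  have hlog4 : ContinuousOn (fun v : Fin 7 → ℝ => Real.log |v 4|) V := by
    apply ContinuousOn.log ((continuous_apply 4).abs.continuousOn)
    intro v hv; simpa using hv.2
  apply continuousOn_pi.mpr
  intro i
  fin_cases i <;> simp only [h3, Matrix.cons_val_zero, Matrix.cons_val_one,
    Matrix.head_cons, Matrix.cons_val_two, Matrix.tail_cons, Matrix.cons_val_three,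
    Matrix.cons_val_four, Matrix.cons_val_succ]
  · exact (continuous_apply 0).continuousOn
  · exact (continuous_apply 1).continuousOn.add
      ((continuousOn_const.mul (continuous_apply 3).continuousOn).mul hlog3)
  · exact (continuous_apply 2).continuousOn.add
      ((continuous_apply 4).continuousOn.mul hlog4)
  · exact (continuous_apply 3).continuousOn
  · exact (continuous_apply 4).continuousOn
  · exact (continuous_apply 5).continuousOn
  · exact (continuous_apply 6).continuousOn

lemma contOn_g3 (l : ℝ) : ContinuousOn (g3 l) V := by
  have hlog3 : ContinuousOn (fun v : Fin 7 → ℝ => Real.log |v 3|) V := by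
    apply ContinuousOn.log ((continuous_apply 3).abs.continuousOn)
    intro v hv; simpa using hv.1
  have hlog4 : ContinuousOn (fun v : Fin 7 → ℝ => Real.log |v 4|) V := by
    apply ContinuousOn.log ((continuous_apply 4).abs.continuousOn)
    intro v hv; simpa using hv.2
  apply continuousOn_pi.mpr
  intro i
  fin_cases i <;> simp only [g3, Matrix.cons_val_zero, Matrix.cons_val_one,
    Matrix.head_cons, Matrix.cons_val_two, Matrix.tail_cons, Matrix.cons_val_three,
    Matrix.cons_val_four, Matrix.cons_val_succ]
  · exact (continuous_apply 0).continuousOn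
  · exact (continuous_apply 1).continuousOn.sub
      ((continuousOn_const.mul (continuous_apply 3).continuousOn).mul hlog3)
  · exact (continuous_apply 2).continuousOn.sub
      ((continuous_apply 4).continuousOn.mul hlog4)
  · exact (continuous_apply 3).continuousOn
  · exact (continuous_apply 4).continuousOn
  · exact (continuous_apply 5).continuousOn
  · exact (continuous_apply 6).continuousOn

lemma h3_mem_V (l : ℝ) {v : Fin 7 → ℝ} (hv : v ∈ V) : h3 l v ∈ V := by
  obtain ⟨h1, h2⟩ := hv; exact ⟨by simpa [h3] using h1, by simpa [h3] using h2⟩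

lemma g3_mem_V (l : ℝ) {v : Fin 7 → ℝ} (hv : v ∈ V) : g3 l v ∈ V := by
  obtain ⟨h1, h2⟩ := hv; exact ⟨by simpa [g3] using h1, by simpa [g3] using h2⟩

lemma log_div_eq (l : ℝ) {a b : ℝ} (ha : a ≠ 0) (hb : b ≠ 0) :
    Real.log (|b| / |a| ^ l) = Real.log |b| - l * Real.log |a| := by
  rw [Real.log_div (abs_ne_zero.mpr hb)
    (ne_of_gt (Real.rpow_pos_of_pos (abs_pos.mpr ha) l)),
    Real.log_rpow (abs_pos.mpr ha)]

/-- Key computation: the leaf function transforms correctly. -/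
lemma key_eq (l : ℝ) {v : Fin 7 → ℝ} (h3ne : v 3 ≠ 0) (h4ne : v 4 ≠ 0) :
    (h3 l v) 1 / (h3 l v) 3 - (h3 l v) 2 / (h3 l v) 4 +
      Real.log (|(h3 l v) 4| / |(h3 l v) 3| ^ l) = v 1 / v 3 - v 2 / v 4 := by
  have : (h3 l v) 1 = v 1 + l * v 3 * Real.log |v 3| := rfl
  have h2 : (h3 l v) 2 = v 2 + v 4 * Real.log |v 4| := rfl
  have h3' : (h3 l v) 3 = v 3 := rfl
  have h4' : (h3 l v) 4 = v 4 := rfl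
  rw [this, h2, h3', h4', log_div_eq l h3ne h4ne]
  field_simp
  ring

lemma key_eq' (l : ℝ) {v : Fin 7 → ℝ} (h3ne : v 3 ≠ 0) (h4ne : v 4 ≠ 0) :
    (g3 l v) 1 / (g3 l v) 3 - (g3 l v) 2 / (g3 l v) 4 =
      v 1 / v 3 - v 2 / v 4 + Real.log (|v 4| / |v 3| ^ l) := by
  have h1 : (g3 l v) 1 = v 1 - l * v 3 * Real.log |v 3| := rfl
  have h2 : (g3 l v) 2 = v 2 - v 4 * Real.log |v 4| := rfl
  have h3' : (g3 l v) 3 = v 3 := rfl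
  have h4' : (g3 l v) 4 = v 4 := rfl
  rw [h1, h2, h3', h4', log_div_eq l h3ne h4ne]
  field_simp
  ring

/-- For fixed `λ`, `h₃` restricts to a homeomorphism of `V` onto itself, and it
maps each leaf `{x₂/x₄ − x₃/x₅ = c, εx₄ > 0, δx₅ > 0}` of the G₃-foliation
bijectively onto the leaf `{x₂/x₄ − x₃/x₅ + ln(|x₅|/|x₄|^λ) = c, εx₄ > 0, δx₅ > 0}`
of the G₁₀^λ-foliation. -/
theorem h3_topological_equivalence (l : ℝ) :
    (∃ H : V ≃ₜ V, ∀ v : V, (H v : Fin 7 → ℝ) = h3 l v) ∧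
    ∀ (c ε δ : ℝ), (ε = 1 ∨ ε = -1) → (δ = 1 ∨ δ = -1) →
      Set.BijOn (h3 l)
        {v ∈ V | v 1 / v 3 - v 2 / v 4 = c ∧ ε * v 3 > 0 ∧ δ * v 4 > 0}
        {v ∈ V | v 1 / v 3 - v 2 / v 4 + Real.log (|v 4| / |v 3| ^ l) = c ∧
          ε * v 3 > 0 ∧ δ * v 4 > 0} := by
  constructor
  · refine ⟨{ toFun := fun v => ⟨h3 l v, h3_mem_V l v.2⟩,
              invFun := fun v => ⟨g3 l v, g3_mem_V l v.2⟩,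
              left_inv := fun v => Subtype.ext (g3_h3 l v),
              right_inv := fun v => Subtype.ext (h3_g3 l v),
              continuous_toFun := Continuous.subtype_mk ((contOn_h3 l).restrict) _,
              continuous_invFun := Continuous.subtype_mk ((contOn_g3 l).restrict) _ },
            fun v => rfl⟩
  · intro c ε δ _ _
    refine ⟨?_, ?_, ?_⟩
    · rintro v ⟨hv, heq, hp3, hp4⟩
      have e3 : (h3 l v) 3 = v 3 := rfl
      have e4 : (h3 l v) 4 = v 4 := rfl
      refine ⟨h3_mem_V l hv, ?_, by rw [e3]; exact hp3, by rw [e4]; exact hp4⟩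
      rw [key_eq l hv.1 hv.2]; exact heq
    · intro v _ w _ h
      have := congrArg (g3 l) h
      rwa [g3_h3, g3_h3] at this
    · rintro w ⟨hw, heq, hp3, hp4⟩
      refine ⟨g3 l w, ⟨g3_mem_V l hw, ?_, ?_, ?_⟩, h3_g3 l w⟩
      · rw [key_eq' l hw.1 hw.2]; exact heq
      · show ε * (g3 l w) 3 > 0; exact hp3
      · show δ * (g3 l w) 4 > 0; exact hp4

end
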